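/- arXiv:1803.05493 — 2 statements merged into one kernel-verified Lean document; each statement's English description precedes it below -/
import Mathlib

section
/- Let Γ be a finite connected simplicial graph, let v be a cut vertex of Γ, and let g ∈ A(Γ). Then the cosets ⟨v⟩ and g⟨v⟩, regarded as subsets of A(Γ) with the word metric with respect to VΓ, are at finite Hausdorff distance if and only if g ∈ A(star(v)). -/
noncomputable section

universe u v

/-- Word metric (distance function) on a group with respect to a generating set `S`. -/
def wordDist {G : Type*} [Group G] (S : Set G) (g h : G) : ℝ :=
  sInf ((fun l : List G => (l.length : ℝ)) ''
    {l : List G | (∀ x ∈ l, x ∈ S ∨ x⁻¹ ∈ S) ∧ g * l.prod = h})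

/-- `f` is `(K, A)`-coarse Lipschitz. -/
def CoarseLipschitzWith {X Y : Type*} (K A : ℝ) (dX : X → X → ℝ) (dY : Y → Y → ℝ)
    (f : X → Y) : Prop :=
  ∀ x x', dY (f x) (f x') ≤ K * dX x x' + A

/-- `f` is a `(K, A)`-quasi-isometry. -/
def IsQIWith {X Y : Type*} (K A : ℝ) (dX : X → X → ℝ) (dY : Y → Y → ℝ) (f : X → Y) : Prop :=
  1 ≤ K ∧ 0 ≤ A ∧
  (∀ x x', dX x x' / K - A ≤ dY (f x) (f x') ∧ dY (f x) (f x') ≤ K * dX x x' + A) ∧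
  (∀ y, ∃ x, dY (f x) y ≤ A)

/-- `f` is a quasi-isometry. -/
def IsQI {X Y : Type*} (dX : X → X → ℝ) (dY : Y → Y → ℝ) (f : X → Y) : Prop :=
  ∃ K A : ℝ, IsQIWith K A dX dY f

/-- The Hausdorff distance between `S` and `T` (w.r.t. the distance `d`) is at most `r`. -/
def HausLE {X : Type*} (d : X → X → ℝ) (S T : Set X) (r : ℝ) : Prop :=
  (∀ s ∈ S, ∃ t ∈ T, d s t ≤ r) ∧ (∀ t ∈ T, ∃ s ∈ S, d s t ≤ r)

/-- `S` and `T` are at finite Hausdorff distance. -/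
def FinHaus {X : Type*} (d : X → X → ℝ) (S T : Set X) : Prop :=
  ∃ r : ℝ, 0 ≤ r ∧ HausLE d S T r

/-- The commutator relations of a right-angled Artin group. -/
def raagRels {V : Type} (Γ : SimpleGraph V) : Set (FreeGroup V) :=
  {r | ∃ x y : V, Γ.Adj x y ∧
    r = FreeGroup.of x * FreeGroup.of y * (FreeGroup.of x)⁻¹ * (FreeGroup.of y)⁻¹}

/-- The right-angled Artin group `A(Γ)` of a simplicial graph `Γ`. -/
abbrev Raag {V : Type} (Γ : SimpleGraph V) : Type := PresentedGroup (raagRels Γ)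

/-- The generator of `Raag Γ` corresponding to a vertex. -/
def raagGen {V : Type} (Γ : SimpleGraph V) (x : V) : Raag Γ :=
  PresentedGroup.of (rels := raagRels Γ) x

/-- The word metric on `Raag Γ` with respect to the vertex generators. -/
def raagDist {V : Type} (Γ : SimpleGraph V) : Raag Γ → Raag Γ → ℝ :=
  wordDist (Set.range (raagGen Γ))

/-- `A(Γ)` and `A(Λ)` are quasi-isometric (w.r.t. the vertex word metrics). -/
def RaagQI {V W : Type} (Γ : SimpleGraph V) (Λ : SimpleGraph W) : Prop :=
  ∃ f : Raag Γ → Raag Λ, IsQI (raagDist Γ) (raagDist Λ) f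

/-- A standard geodesic: the coset `g⟨v⟩`, recorded by a basepoint `g` and a label `v`. -/
structure StdGeod {V : Type} (Γ : SimpleGraph V) where
  base : Raag Γ
  label : V

/-- The parametrization `n ↦ g vⁿ` of a standard geodesic, identifying it with `ℤ`. -/
def StdGeod.param {V : Type} {Γ : SimpleGraph V} (l : StdGeod Γ) : ℤ → Raag Γ :=
  fun n => l.base * raagGen Γ l.label ^ n

/-- The underlying subset of a standard geodesic. -/
def StdGeod.carrier {V : Type} {Γ : SimpleGraph V} (l : StdGeod Γ) : Set (Raag Γ) :=
  Set.range l.param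

/-- Two standard geodesics are parallel if they are at finite Hausdorff distance. -/
def Parallel {V : Type} {Γ : SimpleGraph V} (l k : StdGeod Γ) : Prop :=
  FinHaus (raagDist Γ) l.carrier k.carrier

/-- A based quasi-isometry `(A(Γ), l) → (A(Λ), l')`. -/
def IsBasedQI {V W : Type} {Γ : SimpleGraph V} {Λ : SimpleGraph W}
    (f : Raag Γ → Raag Λ) (l : StdGeod Γ) (l' : StdGeod Λ) : Prop :=
  IsQI (raagDist Γ) (raagDist Λ) f ∧ FinHaus (raagDist Λ) (f '' l.carrier) l'.carrier

/-- `str(f, l, C) = r`: on `l`, the map `f` is `C`-close to `n ↦ ±⌊r n⌋ + b`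
(read through the identifications of `l` and `l'` with `ℤ`). -/
def StrWith {V W : Type} {Γ : SimpleGraph V} {Λ : SimpleGraph W}
    (f : Raag Γ → Raag Λ) (l : StdGeod Γ) (l' : StdGeod Λ) (C : ℝ) (r : ℚ) : Prop :=
  ∃ ε : ℤ, (ε = 1 ∨ ε = -1) ∧ ∃ b : ℤ,
    ∀ n : ℤ, raagDist Λ (f (l.param n)) (l'.param (ε * ⌊r * (n : ℚ)⌋ + b)) ≤ C

/-- The stretch factor `str(f, l)` (computed with respect to `l'`) is well-defined
and equals `r`. -/
def HasStr {V W : Type} {Γ : SimpleGraph V} {Λ : SimpleGraph W}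
    (f : Raag Γ → Raag Λ) (l : StdGeod Γ) (l' : StdGeod Λ) (r : ℚ) : Prop :=
  ∃ C : ℝ, 0 ≤ C ∧ StrWith f l l' C r

/-- `l` is an `𝓡`-geodesic. -/
def IsRGeod {V : Type} {Γ : SimpleGraph V} (l : StdGeod Γ) : Prop :=
  ∀ (W : Type) [Fintype W] (Λ : SimpleGraph W) (l' : StdGeod Λ)
    (f g : Raag Γ → Raag Λ),
    IsBasedQI f l l' → IsBasedQI g l l' →
    ∃ r : ℚ, HasStr f l l' r ∧ HasStr g l l' r

/-- The parallelism class `𝒮_l` of a standard geodesic (as a family of subsets). -/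
def parClass {V : Type} {Γ : SimpleGraph V} (l : StdGeod Γ) : Set (Set (Raag Γ)) :=
  {S | ∃ k : StdGeod Γ, S = k.carrier ∧ Parallel l k}

/-- The peripheral structure `𝒫_B` on `Raag Γ` determined by a set `B` of vertices. -/
def periph {V : Type} (Γ : SimpleGraph V) (B : Set V) : Set (Set (Set (Raag Γ))) :=
  {F | ∃ l : StdGeod Γ, l.label ∈ B ∧ F = parClass l}

/-- A `(K, A)`-relative quasi-isometry between spaces with peripheral structures. -/
def IsRelQIWith {X Y : Type*} (K A : ℝ) (dX : X → X → ℝ) (dY : Y → Y → ℝ)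
    (PX : Set (Set (Set X))) (PY : Set (Set (Set Y)))
    (f : X → Y) (fs : Set (Set X) → Set (Set Y)) : Prop :=
  IsQIWith K A dX dY f ∧
  Set.BijOn fs PX PY ∧
  ∀ F ∈ PX, (∀ a ∈ F, ∃ b ∈ fs F, HausLE dY (f '' a) b A) ∧
            (∀ b ∈ fs F, ∃ a ∈ F, HausLE dY (f '' a) b A)

/-- The two spaces with peripheral structures are relatively quasi-isometric. -/
def IsRelQI {X Y : Type*} (dX : X → X → ℝ) (dY : Y → Y → ℝ)
    (PX : Set (Set (Set X))) (PY : Set (Set (Set Y))) : Prop :=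
  ∃ (K A : ℝ) (f : X → Y) (fs : Set (Set X) → Set (Set Y)),
    IsRelQIWith K A dX dY PX PY f fs

/-- Left translation of a family of subsets of `Raag Γ`. -/
def translateFam {V : Type} {Γ : SimpleGraph V} (g : Raag Γ) (F : Set (Set (Raag Γ))) :
    Set (Set (Raag Γ)) :=
  (fun a => (fun x => g * x) '' a) '' F

/-- A decoration on `𝒫_B` that is invariant under the left translation action. -/
def DecorInvariant {V : Type} (Γ : SimpleGraph V) (B : Set V) {O : Type}
    (δ : Set (Set (Raag Γ)) → O) : Prop :=
  ∀ g : Raag Γ, ∀ F ∈ periph Γ B, δ (translateFam g F) = δ F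

/-- A decoration-preserving based relative quasi-isometry
`(A(Γ), 𝒫_{BΓ}, δΓ, l) → (A(Λ), 𝒫_{BΛ}, δΛ, l')`. -/
def IsDecorBasedRelQI {V W : Type} (Γ : SimpleGraph V) (Λ : SimpleGraph W)
    (BΓ : Set V) (BΛ : Set W) {O : Type}
    (δΓ : Set (Set (Raag Γ)) → O) (δΛ : Set (Set (Raag Λ)) → O)
    (l : StdGeod Γ) (l' : StdGeod Λ)
    (f : Raag Γ → Raag Λ) (fs : Set (Set (Raag Γ)) → Set (Set (Raag Λ))) : Prop :=
  (∃ K A : ℝ, IsRelQIWith K A (raagDist Γ) (raagDist Λ) (periph Γ BΓ) (periph Λ BΛ) f fs) ∧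
  (∀ F ∈ periph Γ BΓ, δΛ (fs F) = δΓ F) ∧
  FinHaus (raagDist Λ) (f '' l.carrier) l'.carrier

/-- `A(Γ)` is a dovetail RAAG. -/
def Dovetail {V : Type} (Γ : SimpleGraph V) : Prop :=
  ∀ (W : Type) [Fintype W] (Λ : SimpleGraph W) (BΓ : Set V) (BΛ : Set W)
    (O : Type) (δΓ : Set (Set (Raag Γ)) → O) (δΛ : Set (Set (Raag Λ)) → O),
    DecorInvariant Γ BΓ δΓ → DecorInvariant Λ BΛ δΛ →
    ∀ (l : StdGeod Γ) (l' : StdGeod Λ) (f : Raag Γ → Raag Λ)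
      (fs : Set (Set (Raag Γ)) → Set (Set (Raag Λ))),
      IsDecorBasedRelQI Γ Λ BΓ BΛ δΓ δΛ l l' f fs →
      ∀ lam : Set (Set (Raag Γ)) → ℚ,
        (∀ F ∈ periph Γ BΓ, 0 < lam F) →
        (∃ M : ℚ, 1 ≤ M ∧ ∀ F ∈ periph Γ BΓ, 1 / M ≤ lam F ∧ lam F ≤ M) →
        (∀ F ∈ periph Γ BΓ, ∀ F' ∈ periph Γ BΓ, δΓ F = δΓ F' → lam F = lam F') →
        ∃ C : ℝ, 0 ≤ C ∧
          ∃ (g : Raag Γ → Raag Λ) (gs : Set (Set (Raag Γ)) → Set (Set (Raag Λ))),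
            IsDecorBasedRelQI Γ Λ BΓ BΛ δΓ δΛ l l' g gs ∧
            (∀ l2 : StdGeod Γ, l2.label ∈ BΓ → ¬ IsRGeod l2 →
              ∀ l3 : StdGeod Λ, FinHaus (raagDist Λ) (g '' l2.carrier) l3.carrier →
                StrWith g l2 l3 C (lam (parClass l2))) ∧
            (∀ l2 : StdGeod Γ, l2.label ∈ BΓ → IsRGeod l2 →
              ∀ l3 : StdGeod Λ, FinHaus (raagDist Λ) (g '' l2.carrier) l3.carrier →
                ∃ r : ℚ, StrWith g l2 l3 C r)

/-- The closed star of a vertex, as a vertex set. -/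
def starSet {V : Type} (Γ : SimpleGraph V) (x : V) : Set V :=
  insert x {u | Γ.Adj x u}

/-- The link of a vertex, as a vertex set. -/
def lkSet {V : Type} (Γ : SimpleGraph V) (x : V) : Set V := {u | Γ.Adj x u}

/-- The link of `x` inside the induced subgraph on `S`. -/
def lkIn {V : Type} (Γ : SimpleGraph V) (S : Set V) (x : V) : Set V :=
  {u | u ∈ S ∧ Γ.Adj x u}

/-- `x` is a cut vertex: deleting it (and incident edges) disconnects the graph. -/
def CutVertex {V : Type} (Γ : SimpleGraph V) (x : V) : Prop :=
  ¬ (Γ.induce {u : V | u ≠ x}).Preconnected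

/-- The vertex set `S` spans a biconnected subgraph: connected with no cut vertex. -/
def Biconn {V : Type} (Γ : SimpleGraph V) (S : Set V) : Prop :=
  (Γ.induce S).Connected ∧ ∀ x ∈ S, (Γ.induce (S \ {x})).Preconnected

/-- `S` spans a maximal biconnected subgraph. -/
def MaxBiconn {V : Type} (Γ : SimpleGraph V) (S : Set V) : Prop :=
  Biconn Γ S ∧ ∀ T : Set V, Biconn Γ T → S ⊆ T → S = T

/-- The collection `C₁` of maximal biconnected subgraphs: those containing at least
two cut vertices, or not contained in the star of any cut vertex. -/
def C1 {V : Type} (Γ : SimpleGraph V) : Set (Set V) :=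
  {S | MaxBiconn Γ S ∧
    ((∃ x ∈ S, ∃ y ∈ S, x ≠ y ∧ CutVertex Γ x ∧ CutVertex Γ y) ∨
     (∀ x : V, CutVertex Γ x → ¬ S ⊆ starSet Γ x))}

/-- `Γ` is an `n`-clique tree-graded graph. -/
def NCliqueTreeGraded {V : Type} (Γ : SimpleGraph V) (n : ℕ) : Prop :=
  Γ.Connected ∧
  (∀ x : V, CutVertex Γ x ∨ (∃! u : V, Γ.Adj x u)) ∧
  (∃ x y : V, 3 ≤ Γ.dist x y) ∧
  (∀ S : Set V, MaxBiconn Γ S →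
    ((Γ.IsClique S ∧ S.ncard = n ∧ ∀ x ∈ S, CutVertex Γ x) ∨
     (Γ.IsClique S ∧ S.ncard = 2 ∧ ∃! x : V, x ∈ S ∧ CutVertex Γ x)))

/-- The subgroup of `Raag Γ` generated by the vertices in `T`. -/
def subRaag {V : Type} (Γ : SimpleGraph V) (T : Set V) : Subgroup (Raag Γ) :=
  Subgroup.closure (raagGen Γ '' T)

/-- The word metric on the subgroup generated by `T`, w.r.t. the generators from `T`. -/
def subDist {V : Type} (Γ : SimpleGraph V) (T : Set V) :
    ↥(subRaag Γ T) → ↥(subRaag Γ T) → ℝ :=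
  wordDist {x : ↥(subRaag Γ T) | ∃ u ∈ T, (x : Raag Γ) = raagGen Γ u}

/-- The cylinder group `A(star(x))`. -/
def cylGroup {V : Type} (Γ : SimpleGraph V) (x : V) : Subgroup (Raag Γ) :=
  subRaag Γ (starSet Γ x)

/-- The word metric on the cylinder `A(star(x))` w.r.t. the vertices of `star(x)`. -/
def cylDist {V : Type} (Γ : SimpleGraph V) (x : V) :
    ↥(cylGroup Γ x) → ↥(cylGroup Γ x) → ℝ :=
  subDist Γ (starSet Γ x)

/-- The coset `a⟨x⟩`, as a subset of the cylinder `A(star(x))`. -/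
def cylCoset {V : Type} (Γ : SimpleGraph V) (x : V) (a : Raag Γ) :
    Set ↥(cylGroup Γ x) :=
  {g | ∃ n : ℤ, (g : Raag Γ) = a * raagGen Γ x ^ n}

/-- The peripheral structure `𝒫_x` on the cylinder `A(star(x))`: one element for each
coset `g·A(star_{Γ'}(x))` with `Γ' ∈ C₁` containing `x`, namely the family of cosets
`{g·h·⟨x⟩ : h ∈ A(lk_{Γ'}(x))}`. -/
def cylPeriph {V : Type} (Γ : SimpleGraph V) (x : V) :
    Set (Set (Set ↥(cylGroup Γ x))) :=
  {F | ∃ S ∈ C1 Γ, x ∈ S ∧ ∃ g : Raag Γ, g ∈ cylGroup Γ x ∧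
    F = {c | ∃ h ∈ subRaag Γ (lkIn Γ S x), c = cylCoset Γ x (g * h)}}

/-- The factors `A(T) ≤ A(Γ)` and `A(T') ≤ A(Λ)` are quasi-isometric. -/
def FactorQI {V W : Type} (Γ : SimpleGraph V) (Λ : SimpleGraph W)
    (T : Set V) (T' : Set W) : Prop :=
  ∃ φ : ↥(subRaag Γ T) → ↥(subRaag Λ T'), IsQI (subDist Γ T) (subDist Λ T') φ

/-!
If `g` commutes with `v`, left multiplication by `g` moves every `vⁿ` to `g vⁿ = vⁿ g`, at the
constant distance `|g|`. Conversely, if the two cosets are at Hausdorff distance `r`, then each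
`v⁻ⁿ g v^{m(n)}` lies in the finite ball of radius `r`, so two of them coincide and
`g v^b = v^a g` with `a ≠ 0`; the exponent sum at `v` gives `a = b`. Finally the centraliser of
`v^a` is `A(star v)`: `A(Γ)` is the amalgam `A(star v) *_{A(lk v)} A(Γ ∖ v)`, in which `v^a` is
central in its factor and outside the edge group, and a reduced word that begins and ends outside
that factor cannot commute with it, while letters from the factor can be peeled off at either end.
-/

open Function

section WordMetric

variable {G : Type*} [Group G] (S : Set G)

theorem wordDist_nonneg (a b : G) : 0 ≤ wordDist S a b :=
  Real.sInf_nonneg <| by rintro _ ⟨l, -, rfl⟩; positivity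

theorem wordDist_mul_left (a b c : G) : wordDist S (a * b) (a * c) = wordDist S b c := by
  simp only [wordDist, mul_assoc, mul_right_inj]

theorem finite_setOf_wordDist_one_le (hS : S.Finite) (hgen : Subgroup.closure S = ⊤) (r : ℝ) :
    {x | wordDist S 1 x ≤ r}.Finite := by
  have : Finite ↥(S ∪ S⁻¹) := (hS.union hS.inv).to_subtype
  refine ((List.finite_length_le ↥(S ∪ S⁻¹) ⌈r⌉₊).image
    fun l => (l.map Subtype.val).prod).subset fun x hx => ?_
  replace hx : wordDist S 1 x ≤ r := hx
  rw [wordDist] at hx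
  have hx' : x ∈ Submonoid.closure (S ∪ S⁻¹) := by
    rw [← Subgroup.closure_toSubmonoid, hgen]; trivial
  obtain ⟨l₀, hl₀, rfl⟩ := Submonoid.exists_list_of_mem_closure hx'
  obtain ⟨_, ⟨l, ⟨hlS, hl⟩, rfl⟩, hlen⟩ := exists_lt_of_csInf_lt
    (by exact ⟨_, l₀, ⟨fun y hy => (hl₀ y hy).imp_right Set.mem_inv.1, one_mul _⟩, rfl⟩)
    ((hx.trans (Nat.le_ceil r)).trans_lt (lt_add_one _))
  lift l to List ↥(S ∪ S⁻¹) using fun y hy => (hlS y hy).imp_right Set.mem_inv.2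
  refine ⟨l, ?_, by simpa using hl⟩
  have : (l.length : ℝ) < ⌈r⌉₊ + 1 := by simpa using hlen
  exact Nat.lt_succ_iff.1 (by exact_mod_cast this)

end WordMetric

namespace Monoid.CoprodI.Word

variable {ι : Type*} {M : ι → Type*} [∀ i, Monoid (M i)]

def tail (w : Word M) : Word M :=
  ⟨w.toList.tail, fun l hl => w.ne_one l (List.mem_of_mem_tail hl), w.chain_ne.tail⟩

def dropLast (w : Word M) : Word M :=
  ⟨w.toList.dropLast, fun l hl => w.ne_one l (List.mem_of_mem_dropLast hl), w.chain_ne.dropLast⟩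

theorem prod_eq_of_mul_prod_tail {w : Word M} {l : Σ i, M i} (h : w.toList.head? = some l) :
    w.prod = of l.2 * w.tail.prod := by
  rw [prod, ← List.cons_head?_tail h]
  rfl

theorem prod_eq_prod_dropLast_mul {w : Word M} {l : Σ i, M i} (h : w.toList.getLast? = some l) :
    w.prod = w.dropLast.prod * of l.2 := by
  rw [prod, ← List.dropLast_append_getLast? l h]
  simp [prod, dropLast]

end Monoid.CoprodI.Word

namespace Monoid.PushoutI

open CoprodI

variable {ι : Type*} {G : ι → Type*} {H : Type*} [∀ i, Group (G i)] [Group H]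
  {φ : ∀ i, H →* G i}

theorem Reduced.tail {w : Word G} (hw : Reduced φ w) : Reduced φ w.tail :=
  fun l hl => hw l (List.mem_of_mem_tail hl)

theorem Reduced.dropLast {w : Word G} (hw : Reduced φ w) : Reduced φ w.dropLast :=
  fun l hl => hw l (List.mem_of_mem_dropLast hl)

theorem reduced_neWord_singleton_iff {i : ι} {x : G i} (hx : x ≠ 1) :
    Reduced φ (NeWord.singleton x hx).toWord ↔ x ∉ (φ i).range := by
  simp [Reduced, NeWord.toWord]

theorem reduced_neWord_append_iff {i j k l : ι} {w₁ : NeWord G i j} {hjk : j ≠ k}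
    {w₂ : NeWord G k l} :
    Reduced φ (w₁.append hjk w₂).toWord ↔
      Reduced φ w₁.toWord ∧ Reduced φ w₂.toWord := by
  simp only [Reduced, NeWord.toWord, NeWord.toList, List.mem_append, or_imp, forall_and]

theorem reduced_neWord_inv {i j : ι} {w : NeWord G i j} (hw : Reduced φ w.toWord) :
    Reduced φ w.inv.toWord := by
  induction w with
  | singleton x _ =>
    rw [reduced_neWord_singleton_iff] at hw
    rwa [NeWord.inv, reduced_neWord_singleton_iff, inv_mem_iff]
  | append w₁ _ w₂ ih₁ ih₂ =>
    rw [reduced_neWord_append_iff] at hw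
    rw [NeWord.inv]
    exact reduced_neWord_append_iff.2 ⟨ih₂ hw.2, ih₁ hw.1⟩

theorem not_commute_neWord_prod (hφ : ∀ i, Injective (φ i)) {i j k : ι} {c : G i}
    (hc : c ∉ (φ i).range) (w : NeWord G j k) (hw : Reduced φ w.toWord) (hj : j ≠ i)
    (hk : k ≠ i) : ¬Commute (ofCoprodI (φ := φ) w.prod) (of i c) := by
  intro hcomm
  have hc₁ : c ≠ 1 := fun h => hc (h ▸ one_mem _)
  -- `w c w⁻¹ c⁻¹` is a nonempty reduced word, so it cannot be trivial
  let u := ((w.append hk (.singleton c hc₁)).append hk.symm w.inv).append hj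
    (.singleton c⁻¹ (inv_ne_one.2 hc₁))
  have hu : Reduced φ u.toWord := by
    simp only [u, reduced_neWord_append_iff, reduced_neWord_singleton_iff, inv_mem_iff]
    exact ⟨⟨⟨hw, hc⟩, reduced_neWord_inv hw⟩, hc⟩
  have hprod : ofCoprodI (φ := φ) u.prod = 1 := by
    simp only [u, NeWord.append_prod, NeWord.inv_prod, NeWord.prod_singleton, map_mul, map_inv,
      ofCoprodI_of, hcomm.eq]
    group
  have := hu.eq_empty_of_mem_range hφ (hprod ▸ one_mem _)
  exact u.toList_ne_nil (congrArg Word.toList this)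

theorem commute_of_of_mem_center {i : ι} {c : G i} (hc : c ∈ Subgroup.center (G i)) (g : G i) :
    Commute (of (φ := φ) i g) (of i c) :=
  Commute.map (show Commute g c from Subgroup.mem_center_iff.1 hc g) _

theorem Reduced.mem_range_of_commute (hφ : ∀ i, Injective (φ i)) {i : ι} {c : G i}
    (hc : c ∈ Subgroup.center (G i)) (hcφ : c ∉ (φ i).range) {w : Word G} (hw : Reduced φ w)
    (h : Commute (ofCoprodI (φ := φ) w.prod) (of i c)) :
    ofCoprodI (φ := φ) w.prod ∈ (of (φ := φ) i).range := by
  induction hn : w.toList.length using Nat.strong_induction_on generalizing w with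
  | _ n ih =>
  obtain rfl | hne := eq_or_ne w .empty
  · simp
  have hpos : 0 < n := hn ▸ List.length_pos_iff.2 fun h => hne (Word.ext h)
  obtain ⟨j, k, w, rfl⟩ := NeWord.of_word w hne
  by_cases hj : j = i
  · subst hj
    rw [Word.prod_eq_of_mul_prod_tail w.toList_head?, map_mul, ofCoprodI_of] at h ⊢
    have hcomm := (commute_of_of_mem_center hc w.head).inv_left.mul_left h
    refine mul_mem ⟨_, rfl⟩ (ih _ ?_ hw.tail (by simpa using hcomm) rfl)
    simp only [Word.tail, List.length_tail]
    omega
  by_cases hk : k = i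
  · subst hk
    rw [Word.prod_eq_prod_dropLast_mul w.toList_getLast?, map_mul, ofCoprodI_of] at h ⊢
    have hcomm := h.mul_left (commute_of_of_mem_center hc w.last).inv_left
    refine mul_mem (ih _ ?_ hw.dropLast (by simpa using hcomm) rfl) ⟨_, rfl⟩
    simp only [Word.dropLast, List.length_dropLast]
    omega
  exact absurd h (not_commute_neWord_prod hφ hcφ w hw hj hk)

theorem NormalWord.reduced {d : Transversal φ} (w : NormalWord d) : Reduced φ w.toWord := by
  rintro ⟨i, g⟩ hg hgφ
  have := ((d.compl i).equiv_snd_eq_self_of_mem_of_one_mem (one_mem _)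
    (w.normalized i _ hg)).symm.trans ((d.compl i).equiv_snd_eq_one_of_mem_of_one_mem
    (d.one_mem i) hgφ)
  exact w.ne_one _ hg (congrArg Subtype.val this)

theorem mem_range_of_of_commute (hφ : ∀ i, Injective (φ i)) {i : ι} {c : G i}
    (hc : c ∈ Subgroup.center (G i)) (hcφ : c ∉ (φ i).range) {x : PushoutI φ}
    (h : Commute x (of i c)) : x ∈ (of (φ := φ) i).range := by
  classical
  obtain ⟨d⟩ := NormalWord.transversal_nonempty φ hφ
  set w := x • (NormalWord.empty : NormalWord d)
  have hx : x = of i (φ i w.head) * ofCoprodI w.toWord.prod := by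
    rw [of_apply_eq_base, ← NormalWord.prod, NormalWord.prod_smul, NormalWord.prod_empty, mul_one]
  rw [hx] at h ⊢
  have hcomm := (commute_of_of_mem_center hc (φ i w.head)).inv_left.mul_left h
  exact mul_mem ⟨_, rfl⟩ (w.reduced.mem_range_of_commute hφ hc hcφ (by simpa using hcomm))

end Monoid.PushoutI

section Raag

variable {V W : Type} {Γ : SimpleGraph V} {Λ : SimpleGraph W} {K : Type*} [Group K]

theorem commute_raagGen_of_adj {x y : V} (h : Γ.Adj x y) :
    Commute (raagGen Γ x) (raagGen Γ y) :=
  commutatorElement_eq_one_iff_commute.1 <| by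
    simpa [raagGen, PresentedGroup.of, commutatorElement_def] using
      PresentedGroup.one_of_mem (rels := raagRels Γ) ⟨x, y, h, rfl⟩

theorem closure_range_raagGen : Subgroup.closure (Set.range (raagGen Γ)) = ⊤ :=
  PresentedGroup.closure_range_of _

theorem raag_hom_ext {f f' : Raag Γ →* K} (h : ∀ x, f (raagGen Γ x) = f' (raagGen Γ x)) :
    f = f' :=
  PresentedGroup.ext h

def raagLift (f : V → K) (hf : ∀ x y, Γ.Adj x y → Commute (f x) (f y)) : Raag Γ →* K :=
  PresentedGroup.toGroup <| by
    rintro _ ⟨x, y, hxy, rfl⟩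
    simpa [commutatorElement_def] using commutatorElement_eq_one_iff_commute.2 (hf x y hxy)

@[simp]
theorem raagLift_raagGen (f : V → K) (hf : ∀ x y, Γ.Adj x y → Commute (f x) (f y)) (x : V) :
    raagLift f hf (raagGen Γ x) = f x :=
  PresentedGroup.toGroup.of _

def raagMap (f : Γ →g Λ) : Raag Γ →* Raag Λ :=
  raagLift (raagGen Λ ∘ f) fun _ _ h => commute_raagGen_of_adj (f.map_adj h)

@[simp]
theorem raagMap_raagGen (f : Γ →g Λ) (x : V) : raagMap f (raagGen Γ x) = raagGen Λ (f x) :=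
  raagLift_raagGen _ _ x

theorem raagMap_injective (f : Γ ↪g Λ) : Injective (raagMap f.toHom) := by
  classical
  -- the retraction killing the vertices outside the image of `f`
  let r : Raag Λ →* Raag Γ := raagLift
    (fun w => if h : w ∈ Set.range f then raagGen Γ h.choose else 1) fun w w' hww' => by
      by_cases hw : w ∈ Set.range f
      · by_cases hw' : w' ∈ Set.range f
        · simp only [dif_pos hw, dif_pos hw']
          refine commute_raagGen_of_adj (f.map_adj_iff.1 ?_)
          rwa [hw.choose_spec, hw'.choose_spec]
        · simp only [dif_neg hw', Commute.one_right]
      · simp only [dif_neg hw, Commute.one_left]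
  have hr : r.comp (raagMap f.toHom) = MonoidHom.id _ := raag_hom_ext fun x => by
    have hx : f.toHom x ∈ Set.range f := ⟨x, rfl⟩
    simp only [MonoidHom.comp_apply, raagMap_raagGen, r, raagLift_raagGen, MonoidHom.id_apply]
    rw [dif_pos hx, f.injective hx.choose_spec]
  exact LeftInverse.injective (DFunLike.congr_fun hr)

theorem range_raagMap_induce (s : Set V) :
    (raagMap (SimpleGraph.Embedding.induce s).toHom).range = subRaag Γ s := by
  rw [MonoidHom.range_eq_map, ← closure_range_raagGen, MonoidHom.map_closure, ← Set.range_comp]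
  congr 1
  ext
  simp

theorem subRaag_univ : subRaag Γ Set.univ = ⊤ := by
  rw [subRaag, Set.image_univ, closure_range_raagGen]

theorem subRaag_starSet_le_centralizer (v : V) :
    subRaag Γ (starSet Γ v) ≤ Subgroup.centralizer {raagGen Γ v} := by
  refine Subgroup.closure_le _ |>.2 ?_
  rintro _ ⟨u, rfl | hu, rfl⟩
  exacts [Subgroup.mem_centralizer_singleton_iff.2 rfl,
    Subgroup.mem_centralizer_singleton_iff.2 (commute_raagGen_of_adj hu).eq.symm]

open scoped Classical in
def raagExpSum (v : V) : Raag Γ →* Multiplicative ℤ :=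
  raagLift (fun u => if u = v then .ofAdd 1 else 1) fun _ _ _ => Commute.all _ _

theorem raagExpSum_raagGen_of_ne {u v : V} (h : u ≠ v) : raagExpSum v (raagGen Γ u) = 1 := by
  simp [raagExpSum, h]

theorem raagExpSum_raagGen_zpow (v : V) (a : ℤ) :
    raagExpSum v (raagGen Γ v ^ a) = .ofAdd a := by
  simp [raagExpSum, ← ofAdd_zsmul]

theorem eq_of_mul_raagGen_zpow_eq_zpow_mul {g : Raag Γ} {v : V} {a b : ℤ}
    (h : g * raagGen Γ v ^ a = raagGen Γ v ^ b * g) : a = b := by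
  have := congrArg (raagExpSum v) h
  rw [map_mul, map_mul, mul_comm, raagExpSum_raagGen_zpow, raagExpSum_raagGen_zpow,
    mul_right_cancel_iff] at this
  exact Multiplicative.ofAdd.injective this

end Raag

namespace StarAmalgam

open Monoid PushoutI

variable {V : Type} (Γ : SimpleGraph V) (v : V)

theorem lkSet_subset_starSet : lkSet Γ v ⊆ starSet Γ v := Set.subset_insert _ _

theorem lkSet_subset_ne : lkSet Γ v ⊆ {u | u ≠ v} := fun _ hu => (Γ.ne_of_adj hu).symm

/-- The factors of the splitting `A(Γ) = A(star v) *_{A(lk v)} A(Γ ∖ v)`, indexed by `Bool`. -/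
abbrev factor : Bool → Type
  | false => Raag (Γ.induce (starSet Γ v))
  | true => Raag (Γ.induce {u | u ≠ v})

instance : ∀ b, Group (factor Γ v b)
  | false => inferInstanceAs (Group (Raag _))
  | true => inferInstanceAs (Group (Raag _))

def incl : ∀ b, Raag (Γ.induce (lkSet Γ v)) →* factor Γ v b
  | false => raagMap (Γ.induceHomOfLE (lkSet_subset_starSet Γ v)).toHom
  | true => raagMap (Γ.induceHomOfLE (lkSet_subset_ne Γ v)).toHom

theorem incl_injective : ∀ b, Injective (incl Γ v b)
  | false => raagMap_injective _
  | true => raagMap_injective _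

def vertex : starSet Γ v := ⟨v, Set.mem_insert _ _⟩

theorem of_true_eq_of_false {u : V} (hu : Γ.Adj v u) :
    of (φ := incl Γ v) true (raagGen _ ⟨u, lkSet_subset_ne Γ v hu⟩) =
      of false (raagGen _ ⟨u, lkSet_subset_starSet Γ v hu⟩) := by
  have h := fun b => of_apply_eq_base (incl Γ v) b (raagGen _ ⟨u, hu⟩)
  exact (h true).trans (h false).symm

open scoped Classical in
def toAmalg : Raag Γ →* PushoutI (incl Γ v) :=
  raagLift (fun u => if h : u = v then of false (raagGen _ (vertex Γ v))
      else of true (raagGen (Γ.induce {u | u ≠ v}) ⟨u, h⟩)) <| by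
    have hv : ∀ u (hu : Γ.Adj v u),
        Commute (of (φ := incl Γ v) false (raagGen _ (vertex Γ v)))
          (of true (raagGen (Γ.induce {u | u ≠ v}) ⟨u, (Γ.ne_of_adj hu).symm⟩)) := fun u hu => by
      rw [of_true_eq_of_false Γ v hu]
      exact (commute_raagGen_of_adj
        (show (Γ.induce (starSet Γ v)).Adj (vertex Γ v) ⟨u, _⟩ from hu)).map _
    intro x y hxy
    by_cases hx : x = v
    · subst hx
      simp [(Γ.ne_of_adj hxy).symm, hv y hxy]
    by_cases hy : y = v
    · subst hy
      simp [Γ.ne_of_adj hxy, (hv x hxy.symm).symm]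
    simp only [dif_neg hx, dif_neg hy]
    exact (commute_raagGen_of_adj
      (show (Γ.induce {u | u ≠ v}).Adj ⟨x, hx⟩ ⟨y, hy⟩ from hxy)).map _

def fromAmalg : PushoutI (incl Γ v) →* Raag Γ :=
  lift (fun b => match b with
      | false => raagMap (SimpleGraph.Embedding.induce (starSet Γ v)).toHom
      | true => raagMap (SimpleGraph.Embedding.induce {u | u ≠ v}).toHom)
    (raagMap (SimpleGraph.Embedding.induce (lkSet Γ v)).toHom) fun b => by
      cases b <;> exact raag_hom_ext fun _ => rfl

theorem fromAmalg_toAmalg (g : Raag Γ) : fromAmalg Γ v (toAmalg Γ v g) = g := by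
  suffices (fromAmalg Γ v).comp (toAmalg Γ v) = MonoidHom.id _ from DFunLike.congr_fun this g
  refine raag_hom_ext fun u => ?_
  by_cases hu : u = v
  · subst hu
    simp [toAmalg, fromAmalg, vertex]
  · simp [toAmalg, fromAmalg, hu]

theorem raagGen_vertex_mem_center :
    raagGen _ (vertex Γ v) ∈ Subgroup.center (Raag (Γ.induce (starSet Γ v))) := by
  have hstar : starSet (Γ.induce (starSet Γ v)) (vertex Γ v) = Set.univ := by
    refine Set.eq_univ_of_forall fun ⟨u, hu⟩ => ?_
    rcases hu with rfl | hu
    exacts [Set.mem_insert _ _, Set.mem_insert_of_mem _ hu]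
  refine Subgroup.mem_center_iff.2 fun g => ?_
  exact Subgroup.mem_centralizer_singleton_iff.1 <|
    subRaag_starSet_le_centralizer (vertex Γ v) (hstar ▸ subRaag_univ ▸ Subgroup.mem_top g)

theorem raagGen_vertex_zpow_notMem_range {a : ℤ} (ha : a ≠ 0) :
    raagGen _ (vertex Γ v) ^ a ∉ (incl Γ v false).range := by
  rintro ⟨y, hy⟩
  have hlk : (raagExpSum (vertex Γ v)).comp (incl Γ v false) = 1 :=
    raag_hom_ext fun u => by
      simp only [incl, MonoidHom.comp_apply, raagMap_raagGen, MonoidHom.one_apply]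
      exact raagExpSum_raagGen_of_ne fun h => Γ.ne_of_adj u.2 (congrArg Subtype.val h).symm
  have := congrArg (raagExpSum (vertex Γ v)) hy
  rw [raagExpSum_raagGen_zpow, ← MonoidHom.comp_apply, hlk, MonoidHom.one_apply] at this
  exact ha (Multiplicative.ofAdd.injective this.symm)

end StarAmalgam

open StarAmalgam in
theorem mem_cylGroup_of_commute_zpow {V : Type} {Γ : SimpleGraph V} {v : V} {g : Raag Γ} {a : ℤ}
    (ha : a ≠ 0) (h : Commute g (raagGen Γ v ^ a)) : g ∈ cylGroup Γ v := by
  have hτ : toAmalg Γ v (raagGen Γ v ^ a) =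
      Monoid.PushoutI.of false (raagGen _ (vertex Γ v) ^ a) := by
    simp [toAmalg]
  obtain ⟨y, hy⟩ := Monoid.PushoutI.mem_range_of_of_commute (incl_injective Γ v)
    (zpow_mem (raagGen_vertex_mem_center Γ v) a) (raagGen_vertex_zpow_notMem_range Γ v ha)
    (hτ ▸ h.map (toAmalg Γ v))
  rw [← fromAmalg_toAmalg Γ v g, ← hy, fromAmalg, Monoid.PushoutI.lift_of, cylGroup,
    ← range_raagMap_induce]
  exact ⟨y, rfl⟩

section Cosets

variable {V : Type} (Γ : SimpleGraph V) (v : V) (g : Raag Γ)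

theorem raagDist_mul_left (a b c : Raag Γ) : raagDist Γ (a * b) (a * c) = raagDist Γ b c :=
  wordDist_mul_left _ a b c

theorem finite_setOf_raagDist_one_le [Finite V] (r : ℝ) : {x | raagDist Γ 1 x ≤ r}.Finite :=
  finite_setOf_wordDist_one_le _ (Set.finite_range _) closure_range_raagGen r

theorem finHaus_of_mem_cylGroup (hg : g ∈ cylGroup Γ v) :
    FinHaus (raagDist Γ) {x | ∃ n : ℤ, x = raagGen Γ v ^ n}
      {x | ∃ n : ℤ, x = g * raagGen Γ v ^ n} := by
  have hcomm : Commute g (raagGen Γ v) :=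
    Subgroup.mem_centralizer_singleton_iff.1 (subRaag_starSet_le_centralizer v hg)
  have hdist (n : ℤ) :
      raagDist Γ (raagGen Γ v ^ n) (g * raagGen Γ v ^ n) = raagDist Γ 1 g := by
    rw [(hcomm.zpow_right n).eq, ← raagDist_mul_left Γ (raagGen Γ v ^ n) 1, mul_one]
  refine ⟨raagDist Γ 1 g, wordDist_nonneg _ _ _, ?_, ?_⟩
  · rintro _ ⟨n, rfl⟩
    exact ⟨_, ⟨n, rfl⟩, (hdist n).le⟩
  · rintro _ ⟨n, rfl⟩
    exact ⟨_, ⟨n, rfl⟩, (hdist n).le⟩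

theorem mem_cylGroup_of_finHaus [Finite V]
    (h : FinHaus (raagDist Γ) {x | ∃ n : ℤ, x = raagGen Γ v ^ n}
      {x | ∃ n : ℤ, x = g * raagGen Γ v ^ n}) : g ∈ cylGroup Γ v := by
  obtain ⟨r, -, hnear, -⟩ := h
  have (n : ℤ) : ∃ m : ℤ, raagDist Γ (raagGen Γ v ^ n) (g * raagGen Γ v ^ m) ≤ r := by
    obtain ⟨_, ⟨m, rfl⟩, hd⟩ := hnear _ ⟨n, rfl⟩
    exact ⟨m, hd⟩
  choose m hm using this
  obtain ⟨n₁, n₂, hlt, heq⟩ := Set.Finite.exists_lt_map_eq_of_forall_mem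
    (f := fun n => (raagGen Γ v ^ n)⁻¹ * (g * raagGen Γ v ^ m n)) (fun n => by
      simpa [← raagDist_mul_left Γ (raagGen Γ v ^ n) 1] using hm n)
    (finite_setOf_raagDist_one_le Γ r)
  have hconj : g * raagGen Γ v ^ (m n₁ - m n₂) = raagGen Γ v ^ (n₁ - n₂) * g := by
    rw [inv_mul_eq_iff_eq_mul] at heq
    rw [zpow_sub, zpow_sub, ← mul_assoc, heq]
    group
  rw [eq_of_mul_raagGen_zpow_eq_zpow_mul hconj] at hconj
  exact mem_cylGroup_of_commute_zpow (sub_ne_zero.2 hlt.ne) hconj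

end Cosets

theorem stmt4_general {V : Type} [Fintype V] (Γ : SimpleGraph V)
    (v : V) (g : Raag Γ) :
    FinHaus (raagDist Γ)
        {x : Raag Γ | ∃ n : ℤ, x = raagGen Γ v ^ n}
        {x : Raag Γ | ∃ n : ℤ, x = g * raagGen Γ v ^ n} ↔
      g ∈ cylGroup Γ v :=
  ⟨mem_cylGroup_of_finHaus Γ v g, finHaus_of_mem_cylGroup Γ v g⟩

/-- For a cut vertex `v`, the cosets `⟨v⟩` and `g⟨v⟩` are at finite
Hausdorff distance in `A(Γ)` if and only if `g ∈ A(star(v))`. -/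
theorem stmt4 {V : Type} [Fintype V] (Γ : SimpleGraph V) (hconn : Γ.Connected)
    (v : V) (hv : CutVertex Γ v) (g : Raag Γ) :
    FinHaus (raagDist Γ)
        {x : Raag Γ | ∃ n : ℤ, x = raagGen Γ v ^ n}
        {x : Raag Γ | ∃ n : ℤ, x = g * raagGen Γ v ^ n} ↔
      g ∈ cylGroup Γ v :=
  stmt4_general Γ v g

end
end

section
/- Let X and Y be geodesic metric spaces, let K ≥ 1, A ≥ 0, and let B be a nonzero real number. Suppose γ : X → ℝ is (K,A)-coarse Lipschitz and ψ : X → Y is a (K,A)-quasi-isometry. Then the map φ : ℝ × X → ℝ × Y defined by φ(t,x) = (B·t + γ(x), ψ(x)) is a (K',A')-quasi-isometry, where K' and A' depend only on K, A and B. -/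
noncomputable section

universe u v

/-- `X` is a geodesic metric space. -/
def IsGeodesicSpace (X : Type*) [MetricSpace X] : Prop :=
  ∀ x y : X, ∃ γ : ℝ → X, γ 0 = x ∧ γ (dist x y) = y ∧
    ∀ s ∈ Set.Icc (0 : ℝ) (dist x y), ∀ t ∈ Set.Icc (0 : ℝ) (dist x y),
      dist (γ s) (γ t) = |s - t|

/-- The `ℓ²`-product distance on `ℝ × X`. -/
def prodDist {X : Type*} (d : X → X → ℝ) : (ℝ × X) → (ℝ × X) → ℝ :=
  fun p q => Real.sqrt (|p.1 - q.1| ^ 2 + d p.2 q.2 ^ 2)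

/-! Write `φ(t, x) = (B t + γ x, ψ x)`. Up to the additive error `|γ x - γ x'| ≤ K d(x, x') + A`,
the first coordinate of `φ p - φ q` is `B (t - t')`, and the `ℓ²` distance is comparable to the
sum of the two coordinate distances. So `d(φ p, φ q)` is bounded above by the bounds for `ψ`;
conversely `d(x, x')` is recovered from `d(ψ x, ψ x')`, and then `|B| |t - t'|` from the first
coordinate, which is where `B ≠ 0` enters. A point `(s, y)` is `A`-close to `φ((s - γ x) / B, x)`
for any `x` with `ψ x` `A`-close to `y`. -/

section prodDist

variable {X : Type*} (d : X → X → ℝ) (p q : ℝ × X)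

lemma abs_fst_sub_le_prodDist : |p.1 - q.1| ≤ prodDist d p q :=
  (abs_abs _).ge.trans (Real.abs_le_sqrt (le_add_of_nonneg_right (sq_nonneg _)))

lemma snd_le_prodDist : d p.2 q.2 ≤ prodDist d p q :=
  (le_abs_self _).trans (Real.abs_le_sqrt (le_add_of_nonneg_left (sq_nonneg _)))

lemma prodDist_le_add (hd : 0 ≤ d p.2 q.2) : prodDist d p q ≤ |p.1 - q.1| + d p.2 q.2 :=
  Real.sqrt_le_iff.mpr ⟨by positivity, by nlinarith [abs_nonneg (p.1 - q.1)]⟩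

end prodDist

section Skew

variable {X Y : Type*} [PseudoMetricSpace X] [PseudoMetricSpace Y] {K A B : ℝ}
  {γ : X → ℝ} {ψ : X → Y}

lemma CoarseLipschitzWith.abs_sub_le (hγ : CoarseLipschitzWith K A dist dist γ) (x x' : X) :
    |γ x - γ x'| ≤ K * dist x x' + A := by
  simpa only [Real.dist_eq] using hγ x x'

lemma prodDist_skew_le (hK : 0 ≤ K) (hγ : CoarseLipschitzWith K A dist dist γ)
    (hψ : CoarseLipschitzWith K A dist dist ψ) (p q : ℝ × X) :
    prodDist dist (B * p.1 + γ p.2, ψ p.2) (B * q.1 + γ q.2, ψ q.2) ≤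
      (|B| + 2 * K) * prodDist dist p q + 2 * A := by
  have hfst : |B * p.1 + γ p.2 - (B * q.1 + γ q.2)| ≤
      |B| * |p.1 - q.1| + (K * dist p.2 q.2 + A) :=
    calc |B * p.1 + γ p.2 - (B * q.1 + γ q.2)| = |B * (p.1 - q.1) + (γ p.2 - γ q.2)| := by
          ring_nf
      _ ≤ |B| * |p.1 - q.1| + (K * dist p.2 q.2 + A) := by
          grw [abs_add_le, abs_mul, hγ.abs_sub_le]
  have hΔt := abs_fst_sub_le_prodDist dist p q
  have hΔ := snd_le_prodDist dist p q
  calc _ ≤ |B * p.1 + γ p.2 - (B * q.1 + γ q.2)| + dist (ψ p.2) (ψ q.2) :=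
        prodDist_le_add _ _ _ dist_nonneg
    _ ≤ |B| * |p.1 - q.1| + (K * dist p.2 q.2 + A) + (K * dist p.2 q.2 + A) :=
        add_le_add hfst (hψ _ _)
    _ ≤ (|B| + 2 * K) * prodDist dist p q + 2 * A := by
        nlinarith [mul_le_mul_of_nonneg_left hΔt (abs_nonneg B),
          mul_le_mul_of_nonneg_left hΔ hK]

lemma prodDist_le_skew (hB : B ≠ 0) (hK : 0 < K) (hγ : CoarseLipschitzWith K A dist dist γ)
    (hψ : ∀ x x', dist x x' / K - A ≤ dist (ψ x) (ψ x')) (p q : ℝ × X) :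
    prodDist dist p q ≤ (K + (1 + K ^ 2) / |B|) *
      (prodDist dist (B * p.1 + γ p.2, ψ p.2) (B * q.1 + γ q.2, ψ q.2) + A) := by
  set S := prodDist dist (B * p.1 + γ p.2, ψ p.2) (B * q.1 + γ q.2, ψ q.2)
  have hΔ : dist p.2 q.2 ≤ K * (S + A) := by
    have hD : dist (ψ p.2) (ψ q.2) ≤ S :=
      snd_le_prodDist dist (B * p.1 + γ p.2, ψ p.2) (B * q.1 + γ q.2, ψ q.2)
    rw [mul_comm, ← div_le_iff₀ hK]
    linarith [hψ p.2 q.2]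
  have hu : |B * p.1 + γ p.2 - (B * q.1 + γ q.2)| ≤ S :=
    abs_fst_sub_le_prodDist dist (B * p.1 + γ p.2, ψ p.2) (B * q.1 + γ q.2, ψ q.2)
  have hΔt : |B| * |p.1 - q.1| ≤ (1 + K ^ 2) * (S + A) :=
    calc |B| * |p.1 - q.1|
        = |(B * p.1 + γ p.2 - (B * q.1 + γ q.2)) - (γ p.2 - γ q.2)| := by
          rw [← abs_mul]; ring_nf
      _ ≤ S + (K * dist p.2 q.2 + A) := by
          grw [abs_sub, hu, hγ.abs_sub_le]
      _ ≤ (1 + K ^ 2) * (S + A) := by nlinarith [mul_le_mul_of_nonneg_left hΔ hK.le]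
  have hB' : 0 < |B| := abs_pos.mpr hB
  calc prodDist dist p q ≤ |p.1 - q.1| + dist p.2 q.2 := prodDist_le_add _ _ _ dist_nonneg
    _ ≤ (1 + K ^ 2) * (S + A) / |B| + K * (S + A) := by
        gcongr
        rwa [le_div_iff₀ hB', mul_comm]
    _ = (K + (1 + K ^ 2) / |B|) * (S + A) := by ring

theorem isQIWith_skew (hB : B ≠ 0) (hγ : CoarseLipschitzWith K A dist dist γ)
    (hψ : IsQIWith K A dist dist ψ) :
    IsQIWith (|B| + 2 * K + (1 + K ^ 2) / |B|) (2 * A) (prodDist dist) (prodDist dist)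
      (fun p : ℝ × X => (B * p.1 + γ p.2, ψ p.2)) := by
  obtain ⟨hK, hA, hψd, hψs⟩ := hψ
  have hfrac : 0 ≤ (1 + K ^ 2) / |B| := by positivity
  have hB' := abs_nonneg B
  refine ⟨by linarith, by linarith, fun p q => ⟨?_, ?_⟩, fun y => ?_⟩
  · dsimp only
    set S := prodDist dist (B * p.1 + γ p.2, ψ p.2) (B * q.1 + γ q.2, ψ q.2)
    have hS : 0 ≤ S + A := add_nonneg (Real.sqrt_nonneg _) hA
    have hs : prodDist dist p q ≤ (|B| + 2 * K + (1 + K ^ 2) / |B|) * (S + A) :=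
      (prodDist_le_skew hB (by linarith) hγ (fun x x' => (hψd x x').1) p q).trans
        (by gcongr; linarith)
    calc _ ≤ S + A - 2 * A := by
          gcongr
          rwa [div_le_iff₀ (by linarith), mul_comm]
      _ ≤ S := by linarith
  · have hs : 0 ≤ prodDist dist p q := Real.sqrt_nonneg _
    exact (prodDist_skew_le (by linarith) hγ (fun x x' => (hψd x x').2) p q).trans
      (by gcongr ?_ * _ + _; linarith)
  · obtain ⟨x, hx⟩ := hψs y.2
    refine ⟨((y.1 - γ x) / B, x), (prodDist_le_add _ _ _ dist_nonneg).trans ?_⟩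
    have hfst : B * ((y.1 - γ x) / B) + γ x - y.1 = 0 := by field_simp; ring
    simp only [hfst, abs_zero, zero_add]
    linarith

end Skew

/-- If `γ : X → ℝ` is `(K, A)`-coarse Lipschitz, `ψ : X → Y` is a
`(K, A)`-quasi-isometry and `B ≠ 0`, then `(t, x) ↦ (B t + γ x, ψ x)` is a
`(K', A')`-quasi-isometry `ℝ × X → ℝ × Y`, with `K'`, `A'` depending only on `K, A, B`. -/
theorem stmt16 (K A B : ℝ) (hK : 1 ≤ K) (hA : 0 ≤ A) (hB : B ≠ 0) :
    ∃ K' A' : ℝ, 1 ≤ K' ∧ 0 ≤ A' ∧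
      ∀ (X : Type u) (Y : Type v) [MetricSpace X] [MetricSpace Y],
        IsGeodesicSpace X → IsGeodesicSpace Y →
        ∀ (γ : X → ℝ) (ψ : X → Y),
          CoarseLipschitzWith K A (fun a b : X => dist a b) (fun a b : ℝ => dist a b) γ →
          IsQIWith K A (fun a b : X => dist a b) (fun a b : Y => dist a b) ψ →
          IsQIWith K' A' (prodDist fun a b : X => dist a b)
            (prodDist fun a b : Y => dist a b)
            (fun p : ℝ × X => (B * p.1 + γ p.2, ψ p.2)) := by
  have hfrac : 0 ≤ (1 + K ^ 2) / |B| := by positivity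
  exact ⟨|B| + 2 * K + (1 + K ^ 2) / |B|, 2 * A, by linarith [abs_nonneg B], by linarith,
    fun X Y _ _ _ _ γ ψ hγ hψ => isQIWith_skew hB hγ hψ⟩
end
end
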